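/- The subspace L1 = span(X1, X2) Lie-generates the whole Lie algebra L with nonzero brackets [X1,X2]=X3, [X1,X3]=X4, [X2,X3]=X5, [X1,X4]=X6, [X1,X5]=[X2,X4]=X7, [X2,X5]=X8; i.e., the smallest Lie subalgebra containing X1 and X2 equals L. -/
import Mathlib


open scoped BigOperators

noncomputable section

/-- The bracket on `ℝ⁸` given by the structure constants of the Carnot algebra
with growth vector (2,3,5,8): `[X1,X2]=X3, [X1,X3]=X4, [X2,X3]=X5, [X1,X4]=X6,
[X1,X5]=[X2,X4]=X7, [X2,X5]=X8` (indices shifted down by one). -/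
def br (x y : Fin 8 → ℝ) : Fin 8 → ℝ :=
  ![0, 0,
    x 0 * y 1 - x 1 * y 0,
    x 0 * y 2 - x 2 * y 0,
    x 1 * y 2 - x 2 * y 1,
    x 0 * y 3 - x 3 * y 0,
    (x 0 * y 4 - x 4 * y 0) + (x 1 * y 3 - x 3 * y 1),
    x 1 * y 4 - x 4 * y 1]

/-- The `i`-th basis vector `Xᵢ₊₁`. -/
def e (i : Fin 8) : Fin 8 → ℝ := Pi.single i 1

theorem stmt17 : ∀ S : Submodule ℝ (Fin 8 → ℝ),
    e 0 ∈ S → e 1 ∈ S → (∀ x ∈ S, ∀ y ∈ S, br x y ∈ S) → S = ⊤ := by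
  intro S h0 h1 hbr
  have key : ∀ i j k : Fin 8, e i ∈ S → e j ∈ S → br (e i) (e j) = e k → e k ∈ S := by
    intro i j k hi hj hk
    rw [← hk]; exact hbr _ hi _ hj
  have brcalc : ∀ i j k : Fin 8, br (e i) (e j) = e k ↔
      (∀ m : Fin 8, br (e i) (e j) m = e k m) := by
    intro i j k; exact ⟨fun h m => by rw [h], funext⟩
  have h2 : e 2 ∈ S := key 0 1 2 h0 h1 (by
    funext m; fin_cases m <;> simp (config := { decide := true }) [br, e, Pi.single_apply, Matrix.cons_val_succ] <;> rfl)
  have h3 : e 3 ∈ S := key 0 2 3 h0 h2 (by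
    funext m; fin_cases m <;> simp (config := { decide := true }) [br, e, Pi.single_apply, Matrix.cons_val_succ] <;> rfl)
  have h4 : e 4 ∈ S := key 1 2 4 h1 h2 (by
    funext m; fin_cases m <;> simp (config := { decide := true }) [br, e, Pi.single_apply, Matrix.cons_val_succ] <;> rfl)
  have h5 : e 5 ∈ S := key 0 3 5 h0 h3 (by
    funext m; fin_cases m <;> simp (config := { decide := true }) [br, e, Pi.single_apply, Matrix.cons_val_succ] <;> rfl)
  have h6 : e 6 ∈ S := key 0 4 6 h0 h4 (by
    funext m; fin_cases m <;> simp (config := { decide := true }) [br, e, Pi.single_apply, Matrix.cons_val_succ] <;> rfl)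
  have h7 : e 7 ∈ S := key 1 4 7 h1 h4 (by
    funext m; fin_cases m <;> simp (config := { decide := true }) [br, e, Pi.single_apply, Matrix.cons_val_succ] <;> rfl)
  rw [eq_top_iff]
  intro x _
  have hx : x = ∑ i : Fin 8, x i • e i := by
    funext m
    simp [e, Pi.single_apply, Finset.sum_apply]
  rw [hx]
  refine Submodule.sum_mem _ fun i _ => Submodule.smul_mem _ _ ?_
  fin_cases i <;> assumption
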